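/- arXiv:2505.16417 — 3 statements merged into one kernel-verified Lean document; each statement's English description precedes it below -/
import Mathlib

section
/- Let L be the non-abelian free Lie algebra over F_p on d ≥ 2 generators, regarded as an F_p-subalgebra of the free F_p[π]-Lie algebra Λ on the same d generators. Let M be a graded F_p-Lie subalgebra of L that has strong density dens_L(M) = 0 in L. Then the F_p[π]-Lie subalgebra H of Λ generated by M has strong density dens_Λ(H) = 0 in Λ. -/
open Filter Topology
open scoped TensorProduct

/-- The free `F_p`-Lie algebra on `d` generators. -/
abbrev FreeL (p d : ℕ) := FreeLieAlgebra (ZMod p) (Fin d)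

/-- The free `F_p[π]`-Lie algebra on `d` generators (base change of `FreeL p d`). -/
abbrev FreeLam (p d : ℕ) := Polynomial (ZMod p) ⊗[ZMod p] FreeLieAlgebra (ZMod p) (Fin d)

/-- Auxiliary fold for left-normed Lie brackets. -/
noncomputable def lnbAux (p d : ℕ) (acc : FreeL p d) : List (Fin d) → FreeL p d
  | [] => acc
  | j :: w => lnbAux p d ⁅acc, FreeLieAlgebra.of (ZMod p) j⁆ w

/-- The left-normed Lie bracket `[[…[x_{i₁}, x_{i₂}], …], x_{iₙ}]` associated to a word
`i₁ i₂ … iₙ` in the generators. -/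
noncomputable def listBracket (p d : ℕ) : List (Fin d) → FreeL p d
  | [] => 0
  | i :: w => lnbAux p d (FreeLieAlgebra.of (ZMod p) i) w

/-- The `n`-th homogeneous component `L_n` of the free Lie algebra, w.r.t. the standard
grading by total degree in the generators: it is spanned by the left-normed brackets of
weight `n`. -/
noncomputable def Lcomp (p d : ℕ) (n : ℕ) : Submodule (ZMod p) (FreeL p d) :=
  Submodule.span (ZMod p)
    { x : FreeL p d | ∃ w : List (Fin d), w.length = n ∧ x = listBracket p d w }

/-- `J_m = ⊕_{n ≥ m} L_n`. -/
noncomputable def Jpiece (p d : ℕ) (m : ℕ) : Submodule (ZMod p) (FreeL p d) :=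
  ⨆ (n : ℕ) (_ : m ≤ n), Lcomp p d n

/-- The `n`-th homogeneous component `Λ_n = ⊕_{m=1}^{n} π^{n−m} L_m` of the free
`F_p[π]`-Lie algebra, where the generators and `π` have degree `1`. -/
noncomputable def Lamcomp (p d : ℕ) (n : ℕ) : Submodule (ZMod p) (FreeLam p d) :=
  Submodule.span (ZMod p)
    { z : FreeLam p d | ∃ m : ℕ, 1 ≤ m ∧ m ≤ n ∧ ∃ x ∈ Lcomp p d m,
        z = (Polynomial.X ^ (n - m) : Polynomial (ZMod p)) ⊗ₜ[ZMod p] x }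

/-- `I_m = ⊕_{n ≥ m} Λ_n`. -/
noncomputable def Ipiece (p d : ℕ) (m : ℕ) : Submodule (ZMod p) (FreeLam p d) :=
  ⨆ (n : ℕ) (_ : m ≤ n), Lamcomp p d n

/-- The density ratio `dim_{F_p}((M + J_n)/J_n) / dim_{F_p}(L/J_n)` at level `n`. -/
noncomputable def densLRatio (p d : ℕ) (M : Submodule (ZMod p) (FreeL p d)) (n : ℕ) : ℝ :=
  (Module.finrank (ZMod p) (M.map (Jpiece p d n).mkQ) : ℝ) /
    (Module.finrank (ZMod p) (FreeL p d ⧸ Jpiece p d n) : ℝ)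

/-- The density ratio `dim_{F_p}((H + I_n)/I_n) / dim_{F_p}(Λ/I_n)` at level `n`. -/
noncomputable def densLamRatio (p d : ℕ) (W : Submodule (ZMod p) (FreeLam p d)) (n : ℕ) : ℝ :=
  (Module.finrank (ZMod p) (W.map (Ipiece p d n).mkQ) : ℝ) /
    (Module.finrank (ZMod p) (FreeLam p d ⧸ Ipiece p d n) : ℝ)

/-- `dens_L(M) = liminf_n dim((M+J_n)/J_n)/dim(L/J_n)`. -/
noncomputable def densL (p d : ℕ) (M : Submodule (ZMod p) (FreeL p d)) : ℝ :=
  Filter.liminf (densLRatio p d M) Filter.atTop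

/-- `dens_Λ(H) = liminf_n dim((H+I_n)/I_n)/dim(Λ/I_n)`. -/
noncomputable def densLam (p d : ℕ) (W : Submodule (ZMod p) (FreeLam p d)) : ℝ :=
  Filter.liminf (densLamRatio p d W) Filter.atTop

/-!
The `F_p[π]`-Lie algebra `H` generated by `M` lies in the base change `F_p[π] ⊗ M`, which is
spanned by the pieces `π^(j-m) (M ∩ L_m) ⊆ Λ_j` because `M` is graded. Hence
`dim (H + I_n)/I_n ≤ ∑_{j<n} ∑_{m≤j} dim (M ∩ L_m)`, while the pieces `π^(j-m) L_m` are
independent modulo `I_n`, so `dim Λ/I_n ≥ ∑_{j<n} ∑_{m≤j} dim L_m`. The inner sums are bounded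
by the numerator and denominator of the density of `M` at level `j + 1`, whose ratio tends to
`0`; two Stolz–Cesàro steps carry this over to the outer sums, whose denominators are unbounded
because `L_1 ≠ 0`.
-/

namespace Submodule

open Module

variable {K V W ι : Type*} [Field K] [AddCommGroup V] [Module K V] [AddCommGroup W] [Module K W]

theorem finrank_finset_sup_le (s : Finset ι) (N : ι → Submodule K V)
    [∀ i, FiniteDimensional K (N i)] :
    finrank K ↥(s.sup N) ≤ ∑ i ∈ s, finrank K (N i) := by
  classical
  induction s using Finset.induction_on with
  | empty => simp
  | insert i s hi ih =>
    rw [Finset.sup_insert, Finset.sum_insert hi]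
    exact (finrank_add_le_finrank_add_finrank _ _).trans (Nat.add_le_add_left ih _)

theorem map_mkQ_le_finset_sup {s : Finset ι} {N : ι → Submodule K V} {Q U : Submodule K V}
    (hU : U ≤ s.sup N ⊔ Q) : U.map Q.mkQ ≤ (s.sup N).map Q.mkQ := by
  refine (map_mono hU).trans ?_
  rw [map_sup, mkQ_map_self, sup_bot_eq]

theorem finrank_map_mkQ_le_sum {s : Finset ι} {N : ι → Submodule K V}
    [∀ i, FiniteDimensional K (N i)] {Q U : Submodule K V} (hU : U ≤ s.sup N ⊔ Q) :
    finrank K (U.map Q.mkQ) ≤ ∑ i ∈ s, finrank K (N i) :=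
  calc finrank K (U.map Q.mkQ) ≤ finrank K ↥((s.sup N).map Q.mkQ) :=
        finrank_mono (map_mkQ_le_finset_sup hU)
    _ ≤ finrank K ↥(s.sup N) := finrank_map_le _ _
    _ ≤ ∑ i ∈ s, finrank K (N i) := finrank_finset_sup_le s N

theorem finiteDimensional_quotient_of_top_le {s : Finset ι} {N : ι → Submodule K V}
    [∀ i, FiniteDimensional K (N i)] {Q : Submodule K V} (h : ⊤ ≤ s.sup N ⊔ Q) :
    FiniteDimensional K (V ⧸ Q) := by
  have hle := map_mkQ_le_finset_sup h
  rw [map_top, range_mkQ] at hle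
  have := finiteDimensional_of_le hle
  exact Module.Finite.of_surjective (Submodule.subtype ⊤) (fun x => ⟨⟨x, trivial⟩, rfl⟩)

theorem sum_finrank_le_finrank_map_mkQ {s : Finset ι} {N : ι → Submodule K V}
    [∀ i, FiniteDimensional K (N i)] {Q U : Submodule K V} [FiniteDimensional K (V ⧸ Q)]
    (φ : ι → V →ₗ[K] W) (hinj : ∀ i ∈ s, ∀ x ∈ N i, φ i x = 0 → x = 0)
    (hoff : ∀ i ∈ s, ∀ j ∈ s, j ≠ i → ∀ x ∈ N j, φ i x = 0)
    (hQ : ∀ i ∈ s, ∀ x ∈ Q, φ i x = 0) (hU : ∀ i ∈ s, N i ≤ U) :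
    ∑ i ∈ s, finrank K (N i) ≤ finrank K (U.map Q.mkQ) := by
  classical
  let sum : (∀ i : s, N i) →ₗ[K] V :=
    { toFun := fun f => ∑ i, (f i : V)
      map_add' := fun f g => by simp [Finset.sum_add_distrib]
      map_smul' := fun c f => by simp [Finset.smul_sum] }
  have hsum : ∀ f, sum f ∈ U := fun f => sum_mem fun (i : s) _ => hU i i.2 (f i).2
  let g := (Q.mkQ ∘ₗ sum).codRestrict (U.map Q.mkQ) fun f => ⟨_, hsum f, rfl⟩
  have hg : Function.Injective g := by
    rw [← LinearMap.ker_eq_bot, LinearMap.ker_eq_bot']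
    intro f hf
    have hfQ : sum f ∈ Q := (Quotient.mk_eq_zero Q).1 (congrArg Subtype.val hf)
    funext i
    have hφ : φ i (sum f) = φ i (f i) := by
      refine (map_sum _ _ _).trans (Finset.sum_eq_single i (fun j _ hji => ?_) (by simp))
      exact hoff i i.2 j j.2 (fun h => hji (Subtype.ext h)) _ (f j).2
    exact Subtype.ext (hinj i i.2 _ (f i).2 (hφ ▸ hQ i i.2 _ hfQ))
  have := LinearMap.finrank_le_finrank_of_injective hg
  rwa [finrank_pi_fintype, Finset.sum_coe_sort s fun i => finrank K (N i)] at this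

end Submodule

namespace FreeLieAlgebra

variable {R X : Type*} [CommRing R]

theorem eq_top_of_forall_of_mem {K : LieSubalgebra R (FreeLieAlgebra R X)}
    (h : ∀ x, of R x ∈ K) : K = ⊤ := by
  let f : FreeLieAlgebra R X →ₗ⁅R⁆ K := lift R fun x => ⟨_, h x⟩
  have hf : K.incl.comp f = LieHom.id := hom_ext fun x => by simp [f]
  refine eq_top_iff.2 fun y _ => ?_
  have hy : (f y : FreeLieAlgebra R X) = y := LieHom.congr_fun hf y
  exact hy ▸ (f y).2

theorem of_ne_zero [Nontrivial R] (x : X) : of R x ≠ 0 := by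
  intro h
  -- Viewed as an abelian Lie algebra, `R` receives a Lie map sending `of R x` to `1`.
  let _ : LieRing R := LieRing.ofAssociativeRing
  have := congrArg (lift R fun _ : X => (1 : R)) h
  rw [lift_of_apply, map_zero] at this
  exact one_ne_zero this

end FreeLieAlgebra

namespace Polynomial

open TensorProduct

variable {R M : Type*} [CommRing R] [AddCommGroup M] [Module R M]

variable (R M) in
noncomputable def tensorCoeff (k : ℕ) : R[X] ⊗[R] M →ₗ[R] M :=
  TensorProduct.lid R M ∘ₗ TensorProduct.map (lcoeff R k) LinearMap.id

@[simp]
theorem tensorCoeff_tmul (k : ℕ) (f : R[X]) (x : M) :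
    tensorCoeff R M k (f ⊗ₜ x) = f.coeff k • x := by
  simp [tensorCoeff]

theorem tmul_mem_of_forall_X_pow_tmul_mem {T : Submodule R (R[X] ⊗[R] M)} {x : M}
    (h : ∀ k, (X ^ k : R[X]) ⊗ₜ x ∈ T) (f : R[X]) : f ⊗ₜ x ∈ T := by
  induction f using Polynomial.induction_on' with
  | add f g hf hg => rw [add_tmul]; exact add_mem hf hg
  | monomial k c =>
    rw [← C_mul_X_pow_eq_monomial, ← smul_eq_C_mul, ← smul_tmul']
    exact T.smul_mem c (h k)

end Polynomial

namespace LieSubalgebra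

variable {R L : Type*} (A : Type*) [CommRing R] [CommRing A] [Algebra R A] [LieRing L]
  [LieAlgebra R L]

def baseChange (K : LieSubalgebra R L) : LieSubalgebra A (A ⊗[R] L) :=
  { K.toSubmodule.baseChange A with
    lie_mem' := by
      -- `K.toSubmodule.baseChange A` is the range of the Lie hom `A ⊗ K → A ⊗ L`.
      rintro _ _ ⟨s, rfl⟩ ⟨t, rfl⟩
      let s' : A ⊗[R] K := s
      let t' : A ⊗[R] K := t
      exact ⟨(⁅s', t'⁆ : A ⊗[R] K),
        (LieAlgebra.ExtendScalars.map (AlgHom.id R A) K.incl).map_lie s' t'⟩ }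

variable {A} in
theorem lieSpan_one_tmul_le_baseChange (K : LieSubalgebra R L) :
    lieSpan A (A ⊗[R] L) { z | ∃ x ∈ K, z = (1 : A) ⊗ₜ[R] x } ≤ K.baseChange A :=
  lieSpan_le.2 <| by
    rintro _ ⟨x, hx, rfl⟩
    exact Submodule.tmul_mem_baseChange_of_mem 1 hx

end LieSubalgebra

section Asymptotics

open Filter Asymptotics Finset

theorem tendsto_sum_range_natCast_atTop {a : ℕ → ℕ} {j₀ : ℕ} (h : ∀ j, j₀ ≤ j → 1 ≤ a j) :
    Tendsto (fun n => ∑ j ∈ range n, (a j : ℝ)) atTop atTop := by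
  refine (not_summable_iff_tendsto_nat_atTop_of_nonneg fun j => Nat.cast_nonneg _).1 fun hs => ?_
  obtain ⟨j, hj⟩ := ((hs.tendsto_atTop_zero.eventually (gt_mem_nhds one_pos)).and
    (eventually_ge_atTop j₀)).exists
  exact hj.1.not_ge (by exact_mod_cast h j hj.2)

theorem tendsto_div_zero_of_iterated_sums {a b r c u v : ℕ → ℕ} {m₀ : ℕ} (ha : 0 < a m₀)
    (hrc : ∀ n, r n ≤ c n) (hlim : Tendsto (fun n => (r n : ℝ) / c n) atTop (𝓝 0))
    (hb : ∀ n, ∑ m ∈ range n, b m ≤ r n) (hc : ∀ n, c n ≤ ∑ m ∈ range n, a m)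
    (hu : ∀ n, u n ≤ ∑ j ∈ range n, ∑ m ∈ range (j + 1), b m)
    (hv : ∀ n, ∑ j ∈ range n, ∑ m ∈ range (j + 1), a m ≤ v n) :
    Tendsto (fun n => (u n : ℝ) / v n) atTop (𝓝 0) := by
  set A : ℕ → ℕ := fun j => ∑ m ∈ range (j + 1), a m
  set B : ℕ → ℕ := fun j => ∑ m ∈ range (j + 1), b m
  have hA : Tendsto (fun n => ∑ j ∈ range n, (A j : ℝ)) atTop atTop :=
    tendsto_sum_range_natCast_atTop (j₀ := m₀) fun j hj =>
      ha.trans_le (single_le_sum (fun _ _ => Nat.zero_le _) (mem_range.2 (by omega)))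
  have hr : (fun n => (r n : ℝ)) =o[atTop] fun n => (c n : ℝ) :=
    (isLittleO_iff_tendsto' (Eventually.of_forall fun n h => by
      simpa using Nat.le_zero.1 (hrc n |>.trans (by exact_mod_cast h.le)))).2 hlim
  have hBA : (fun j => (B j : ℝ)) =o[atTop] fun j => (A j : ℝ) :=
    (isBigO_of_le _ fun j => by simpa using hb (j + 1)).trans_isLittleO
      ((hr.comp_tendsto (tendsto_add_atTop_nat 1)).trans_isBigO
        (isBigO_of_le _ fun j => by simpa using hc (j + 1)))
  have hu' : (fun n => (u n : ℝ)) =O[atTop] fun n => ∑ j ∈ range n, (B j : ℝ) :=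
    isBigO_of_le _ fun n => by
      rw [Real.norm_natCast, ← Nat.cast_sum, Real.norm_natCast]
      exact_mod_cast hu n
  have hv' : (fun n => ∑ j ∈ range n, (A j : ℝ)) =O[atTop] fun n => (v n : ℝ) :=
    isBigO_of_le _ fun n => by
      rw [Real.norm_natCast, ← Nat.cast_sum, Real.norm_natCast]
      exact_mod_cast hv n
  -- Stolz–Cesàro: `=o` passes to the partial sums because `∑ A` diverges.
  have huv : (fun n => (u n : ℝ)) =o[atTop] fun n => (v n : ℝ) :=
    hu'.trans_isLittleO ((hBA.sum_range (fun _ => Nat.cast_nonneg _) hA).trans_isBigO hv')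
  refine (isLittleO_iff_tendsto' ?_).1 huv
  filter_upwards [hA.eventually_gt_atTop 0] with n hn hvn
  have : (∑ j ∈ range n, A j : ℝ) ≤ v n := by exact_mod_cast hv n
  linarith

end Asymptotics

section Grading

variable {p d : ℕ}

open FreeLieAlgebra

theorem lnbAux_append (acc : FreeL p d) (w : List (Fin d)) (j : Fin d) :
    lnbAux p d acc (w ++ [j]) = ⁅lnbAux p d acc w, of (ZMod p) j⁆ := by
  induction w generalizing acc with
  | nil => rfl
  | cons i w ih => exact ih _

theorem listBracket_append {w : List (Fin d)} (hw : w ≠ []) (j : Fin d) :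
    listBracket p d (w ++ [j]) = ⁅listBracket p d w, of (ZMod p) j⁆ := by
  obtain ⟨i, w, rfl⟩ := List.exists_cons_of_ne_nil hw
  exact lnbAux_append _ _ _

theorem listBracket_singleton (i : Fin d) : listBracket p d [i] = of (ZMod p) i := rfl

theorem listBracket_mem_Lcomp (w : List (Fin d)) : listBracket p d w ∈ Lcomp p d w.length :=
  Submodule.subset_span ⟨w, rfl, rfl⟩

theorem of_mem_Lcomp_one (i : Fin d) : of (ZMod p) i ∈ Lcomp p d 1 :=
  listBracket_mem_Lcomp [i]

theorem Lcomp_zero : Lcomp p d 0 = ⊥ := by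
  rw [Lcomp, eq_bot_iff, Submodule.span_le]
  rintro x ⟨w, hw, rfl⟩
  rw [List.length_eq_zero_iff.1 hw]
  exact zero_mem _

theorem lie_of_mem_Lcomp {m : ℕ} {x : FreeL p d} (hx : x ∈ Lcomp p d m) (i : Fin d) :
    ⁅x, of (ZMod p) i⁆ ∈ Lcomp p d (m + 1) := by
  induction hx using Submodule.span_induction with
  | mem x hx =>
    obtain ⟨w, rfl, rfl⟩ := hx
    rcases eq_or_ne w [] with rfl | hw
    · simp [listBracket]
    · simpa [listBracket_append hw] using listBracket_mem_Lcomp (p := p) (w ++ [i])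
  | zero => simp
  | add x y _ _ hx hy => rw [add_lie]; exact add_mem hx hy
  | smul c x _ hx => rw [smul_lie]; exact Submodule.smul_mem _ _ hx

theorem lie_listBracket_mem_Lcomp (w : List (Fin d)) {m : ℕ} {x : FreeL p d}
    (hx : x ∈ Lcomp p d m) : ⁅x, listBracket p d w⁆ ∈ Lcomp p d (m + w.length) := by
  induction w using List.reverseRecOn generalizing m x with
  | nil => simp [listBracket]
  | append_singleton w j ih =>
    rcases eq_or_ne w [] with rfl | hw
    · exact lie_of_mem_Lcomp hx j
    -- Jacobi: `[x, [w, j]] = [[x, w], j] - [[x, j], w]`.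
    rw [listBracket_append hw, leibniz_lie, ← lie_skew (listBracket p d w)]
    have hlen : m + (w ++ [j]).length = m + w.length + 1 := by simp; ring
    refine add_mem (hlen ▸ lie_of_mem_Lcomp (ih hx) j) (neg_mem ?_)
    rw [hlen, add_right_comm]
    exact ih (lie_of_mem_Lcomp hx j)

theorem lie_mem_Lcomp {a b : ℕ} {x y : FreeL p d} (hx : x ∈ Lcomp p d a)
    (hy : y ∈ Lcomp p d b) : ⁅x, y⁆ ∈ Lcomp p d (a + b) := by
  induction hy using Submodule.span_induction with
  | mem y hy =>
    obtain ⟨w, rfl, rfl⟩ := hy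
    exact lie_listBracket_mem_Lcomp w hx
  | zero => simp
  | add y z _ _ hy hz => rw [lie_add]; exact add_mem hy hz
  | smul c y _ hy => rw [lie_smul]; exact Submodule.smul_mem _ _ hy

theorem iSup_Lcomp_eq_top : ⨆ m, Lcomp p d m = ⊤ := by
  let K : LieSubalgebra (ZMod p) (FreeL p d) :=
    { ⨆ m, Lcomp p d m with
      lie_mem' := fun {x y} hx hy => by
        refine Submodule.iSup_induction (motive := fun x => ⁅x, y⁆ ∈ ⨆ m, Lcomp p d m) _ hx
          (fun a x hxa => ?_) (by simp) (fun x z hx hz => by rw [add_lie]; exact add_mem hx hz)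
        refine Submodule.iSup_induction (motive := fun y => ⁅x, y⁆ ∈ ⨆ m, Lcomp p d m) _ hy
          (fun b y hyb => ?_) (by simp) (fun y z hy hz => by rw [lie_add]; exact add_mem hy hz)
        exact Submodule.mem_iSup_of_mem (a + b) (lie_mem_Lcomp hxa hyb) }
  have hK : K = ⊤ :=
    eq_top_of_forall_of_mem fun i => Submodule.mem_iSup_of_mem 1 (of_mem_Lcomp_one i)
  exact congrArg LieSubalgebra.toSubmodule hK

instance (m : ℕ) : Module.Finite (ZMod p) (Lcomp p d m) := by
  refine Module.Finite.span_of_finite _ ((List.finite_length_eq (Fin d) m).image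
    (listBracket p d) |>.subset ?_)
  rintro x ⟨w, hw, rfl⟩
  exact ⟨w, hw, rfl⟩

end Grading

section Projections

open FreeLieAlgebra Polynomial TensorProduct

variable (p d : ℕ)

/-- On `L_m` this is `x ↦ π^m ⊗ x` (`degreeEmbed_of_mem_Lcomp`), so taking the coefficient of
`π^m` of its value extracts the `L_m`-component: this is `Lproj m`. -/
noncomputable def degreeEmbed : FreeL p d →ₗ⁅ZMod p⁆ FreeLam p d :=
  FreeLieAlgebra.lift (ZMod p) fun i => (X : (ZMod p)[X]) ⊗ₜ of (ZMod p) i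

noncomputable def Lproj (m : ℕ) : FreeL p d →ₗ[ZMod p] FreeL p d :=
  tensorCoeff (ZMod p) (FreeL p d) m ∘ₗ (degreeEmbed p d).toLinearMap

variable {p d}

theorem degreeEmbed_listBracket (w : List (Fin d)) :
    degreeEmbed p d (listBracket p d w) = (X ^ w.length : (ZMod p)[X]) ⊗ₜ listBracket p d w := by
  induction w using List.reverseRecOn with
  | nil => simp [listBracket]
  | append_singleton w j ih =>
    rcases eq_or_ne w [] with rfl | hw
    · simp [listBracket_singleton, degreeEmbed]
    rw [listBracket_append hw, LieHom.map_lie, ih, degreeEmbed, lift_of_apply,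
      LieAlgebra.ExtendScalars.bracket_tmul, List.length_append, List.length_singleton, pow_succ]

theorem degreeEmbed_of_mem_Lcomp {m : ℕ} {x : FreeL p d} (hx : x ∈ Lcomp p d m) :
    degreeEmbed p d x = (X ^ m : (ZMod p)[X]) ⊗ₜ x := by
  induction hx using Submodule.span_induction with
  | mem x hx =>
    obtain ⟨w, rfl, rfl⟩ := hx
    exact degreeEmbed_listBracket w
  | zero => simp
  | add x y _ _ hx hy => rw [map_add, hx, hy, tmul_add]
  | smul c x _ hx => rw [map_smul, hx, tmul_smul]

theorem Lproj_of_mem_Lcomp {k : ℕ} {x : FreeL p d} (hx : x ∈ Lcomp p d k) (m : ℕ) :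
    Lproj p d m x = if k = m then x else 0 := by
  rw [Lproj, LinearMap.comp_apply, LieHom.coe_toLinearMap, degreeEmbed_of_mem_Lcomp hx,
    tensorCoeff_tmul, coeff_X_pow]
  rcases eq_or_ne k m with rfl | h
  · simp
  · simp [h, Ne.symm h]

theorem Lcomp_le_Jpiece {m n : ℕ} (h : n ≤ m) : Lcomp p d m ≤ Jpiece p d n :=
  le_iSup₂_of_le m h le_rfl

theorem Lproj_eq_zero_of_mem_Jpiece {m n : ℕ} (h : m < n) {x : FreeL p d}
    (hx : x ∈ Jpiece p d n) : Lproj p d m x = 0 := by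
  refine (iSup₂_le fun k hk => ?_ : Jpiece p d n ≤ LinearMap.ker (Lproj p d m)) hx
  intro y hy
  simp [Lproj_of_mem_Lcomp hy, show k ≠ m by omega]

theorem top_le_sup_Jpiece (n : ℕ) :
    ⊤ ≤ (Finset.range n).sup (Lcomp p d) ⊔ Jpiece p d n := by
  rw [← iSup_Lcomp_eq_top, iSup_le_iff]
  intro m
  rcases lt_or_ge m n with h | h
  · exact le_sup_of_le_left (Finset.le_sup (Finset.mem_range.2 h))
  · exact le_sup_of_le_right (Lcomp_le_Jpiece h)

variable [Fact p.Prime]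

instance (n : ℕ) : FiniteDimensional (ZMod p) (FreeL p d ⧸ Jpiece p d n) :=
  Submodule.finiteDimensional_quotient_of_top_le (top_le_sup_Jpiece n)

theorem finrank_quotient_Jpiece_le (n : ℕ) :
    Module.finrank (ZMod p) (FreeL p d ⧸ Jpiece p d n) ≤
      ∑ m ∈ Finset.range n, Module.finrank (ZMod p) (Lcomp p d m) := by
  have := Submodule.finrank_map_mkQ_le_sum (top_le_sup_Jpiece (p := p) (d := d) n)
  rwa [Submodule.map_top, Submodule.range_mkQ, finrank_top] at this

theorem sum_finrank_inf_Lcomp_le (N : Submodule (ZMod p) (FreeL p d)) (n : ℕ) :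
    ∑ m ∈ Finset.range n, Module.finrank (ZMod p) ↥(N ⊓ Lcomp p d m) ≤
      Module.finrank (ZMod p) (N.map (Jpiece p d n).mkQ) := by
  refine Submodule.sum_finrank_le_finrank_map_mkQ (Lproj p d) (fun m _ x hx h => ?_)
    (fun m _ k _ hkm x hx => ?_) (fun m hm x hx => ?_) (fun m _ => inf_le_left)
  · rwa [Lproj_of_mem_Lcomp hx.2, if_pos rfl] at h
  · rw [Lproj_of_mem_Lcomp hx.2, if_neg hkm]
  · exact Lproj_eq_zero_of_mem_Jpiece (Finset.mem_range.1 hm) hx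

end Projections

section LamPieces

open Polynomial TensorProduct

variable {p d : ℕ}

noncomputable def coeffLproj (k m : ℕ) : FreeLam p d →ₗ[ZMod p] FreeL p d :=
  Lproj p d m ∘ₗ tensorCoeff (ZMod p) (FreeL p d) k

theorem coeffLproj_X_pow_tmul (k m j : ℕ) (x : FreeL p d) :
    coeffLproj k m ((X ^ j : (ZMod p)[X]) ⊗ₜ x) = if j = k then Lproj p d m x else 0 := by
  rw [coeffLproj, LinearMap.comp_apply, tensorCoeff_tmul, coeff_X_pow]
  rcases eq_or_ne j k with rfl | h
  · simp
  · simp [h, Ne.symm h]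

theorem X_pow_tmul_mem_Ipiece {k m n : ℕ} (h : n ≤ k + m) {x : FreeL p d}
    (hx : x ∈ Lcomp p d m) : (X ^ k : (ZMod p)[X]) ⊗ₜ x ∈ Ipiece p d n := by
  rcases Nat.eq_zero_or_pos m with rfl | hm
  · rw [Lcomp_zero, Submodule.mem_bot] at hx
    simp [hx]
  · refine le_iSup₂_of_le (f := fun j (_ : n ≤ j) => Lamcomp p d j) (k + m) h le_rfl
      (Submodule.subset_span ⟨m, hm, by omega, x, hx, ?_⟩)
    rw [Nat.add_sub_cancel]

theorem coeffLproj_eq_zero_of_mem_Ipiece {k m n : ℕ} (h : k + m < n) {z : FreeLam p d}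
    (hz : z ∈ Ipiece p d n) : coeffLproj k m z = 0 := by
  refine (iSup₂_le fun j hj => ?_ : Ipiece p d n ≤ LinearMap.ker (coeffLproj k m)) hz
  rw [Lamcomp, Submodule.span_le]
  rintro _ ⟨m', -, hm'j, x, hx, rfl⟩
  rw [SetLike.mem_coe, LinearMap.mem_ker, coeffLproj_X_pow_tmul, Lproj_of_mem_Lcomp hx]
  split_ifs <;> first | rfl | omega

variable (p d)

/-- `lamPiece N ⟨j, m⟩ = π^(j-m) (N ∩ L_m)`, a piece of `Λ_j`; `lamPieceIndex n` consists of the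
pairs `m ≤ j < n`, so these pieces for `N = L` span `Λ / I_n`. -/
noncomputable def lamPiece (N : Submodule (ZMod p) (FreeL p d)) (i : Σ _ : ℕ, ℕ) :
    Submodule (ZMod p) (FreeLam p d) :=
  (N ⊓ Lcomp p d i.2).map (TensorProduct.mk (ZMod p) (ZMod p)[X] (FreeL p d) (X ^ (i.1 - i.2)))

def lamPieceIndex (n : ℕ) : Finset (Σ _ : ℕ, ℕ) :=
  (Finset.range n).sigma fun j => Finset.range (j + 1)

variable {p d}

theorem mem_lamPieceIndex {n : ℕ} {i : Σ _ : ℕ, ℕ} : i ∈ lamPieceIndex n ↔ i.2 ≤ i.1 ∧ i.1 < n := by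
  simp [lamPieceIndex, and_comm]

theorem X_pow_tmul_mem_lamPiece_sup {N : Submodule (ZMod p) (FreeL p d)}
    (hN : N ≤ ⨆ m, N ⊓ Lcomp p d m) (n k : ℕ) {x : FreeL p d} (hx : x ∈ N) :
    (X ^ k : (ZMod p)[X]) ⊗ₜ x ∈ (lamPieceIndex n).sup (lamPiece p d N) ⊔ Ipiece p d n := by
  refine Submodule.iSup_induction (motive := fun x => (X ^ k : (ZMod p)[X]) ⊗ₜ x ∈ _) _ (hN hx)
    (fun m x hxm => ?_) (by simp) (fun x y hx hy => by rw [tmul_add]; exact add_mem hx hy)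
  rcases lt_or_ge (k + m) n with h | h
  · refine Submodule.mem_sup_left (Finset.le_sup (f := lamPiece p d N) (b := ⟨k + m, m⟩)
      (mem_lamPieceIndex.2 ⟨Nat.le_add_left m k, h⟩) ⟨x, hxm, ?_⟩)
    simp
  · exact Submodule.mem_sup_right (X_pow_tmul_mem_Ipiece h hxm.2)

theorem baseChange_le_lamPiece_sup {N : Submodule (ZMod p) (FreeL p d)}
    (hN : N ≤ ⨆ m, N ⊓ Lcomp p d m) (n : ℕ) :
    (N.baseChange (ZMod p)[X]).restrictScalars (ZMod p) ≤
      (lamPieceIndex n).sup (lamPiece p d N) ⊔ Ipiece p d n := by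
  rintro _ ⟨t, rfl⟩
  induction t using TensorProduct.induction_on with
  | zero => simp
  | tmul f x =>
    exact tmul_mem_of_forall_X_pow_tmul_mem (fun k => X_pow_tmul_mem_lamPiece_sup hN n k x.2) f
  | add s t hs ht => rw [map_add]; exact add_mem hs ht

theorem finrank_lamPiece (N : Submodule (ZMod p) (FreeL p d)) (i : Σ _ : ℕ, ℕ) :
    Module.finrank (ZMod p) (lamPiece p d N i) = Module.finrank (ZMod p) ↥(N ⊓ Lcomp p d i.2) := by
  have hinj : Function.Injective
      (TensorProduct.mk (ZMod p) (ZMod p)[X] (FreeL p d) (X ^ (i.1 - i.2))) :=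
    Function.LeftInverse.injective (g := tensorCoeff (ZMod p) (FreeL p d) (i.1 - i.2))
      fun x => by simp
  exact (Submodule.equivMapOfInjective _ hinj _).finrank_eq.symm

theorem top_le_lamPiece_sup (n : ℕ) :
    ⊤ ≤ (lamPieceIndex n).sup (lamPiece p d ⊤) ⊔ Ipiece p d n := by
  have := baseChange_le_lamPiece_sup (N := (⊤ : Submodule (ZMod p) (FreeL p d)))
    (by simp only [top_inf_eq, iSup_Lcomp_eq_top, le_refl]) n
  rwa [Submodule.baseChange_top, Submodule.restrictScalars_top] at this

variable [Fact p.Prime]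

instance (N : Submodule (ZMod p) (FreeL p d)) (i : Σ _ : ℕ, ℕ) :
    FiniteDimensional (ZMod p) (lamPiece p d N i) :=
  Module.Finite.map _ _

instance (n : ℕ) : FiniteDimensional (ZMod p) (FreeLam p d ⧸ Ipiece p d n) :=
  Submodule.finiteDimensional_quotient_of_top_le (top_le_lamPiece_sup n)

theorem sum_finrank_Lcomp_le_finrank_quotient_Ipiece (n : ℕ) :
    ∑ j ∈ Finset.range n, ∑ m ∈ Finset.range (j + 1), Module.finrank (ZMod p) (Lcomp p d m) ≤
      Module.finrank (ZMod p) (FreeLam p d ⧸ Ipiece p d n) := by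
  have hinj : ∀ i ∈ lamPieceIndex n, ∀ z ∈ lamPiece p d ⊤ i,
      coeffLproj (i.1 - i.2) i.2 z = 0 → z = 0 := by
    rintro i - _ ⟨x, hx, rfl⟩ h
    simp_all [coeffLproj_X_pow_tmul, Lproj_of_mem_Lcomp hx.2]
  have hoff : ∀ i ∈ lamPieceIndex n, ∀ j ∈ lamPieceIndex n, j ≠ i → ∀ z ∈ lamPiece p d ⊤ j,
      coeffLproj (i.1 - i.2) i.2 z = 0 := by
    rintro i hi j hj hji _ ⟨x, hx, rfl⟩
    rw [mk_apply, coeffLproj_X_pow_tmul, Lproj_of_mem_Lcomp hx.2]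
    rw [mem_lamPieceIndex] at hi hj
    split_ifs with h1 h2 <;> first | rfl | exact absurd (Sigma.ext (by omega) (by simp; omega)) hji
  have key := Submodule.sum_finrank_le_finrank_map_mkQ (U := ⊤) _ hinj hoff
    (fun i hi z hz => coeffLproj_eq_zero_of_mem_Ipiece (n := n)
      (by have := mem_lamPieceIndex.1 hi; omega) hz)
    (fun _ _ => le_top)
  rw [Submodule.map_top, Submodule.range_mkQ, finrank_top] at key
  rw [Finset.sum_sigma']
  refine le_trans (le_of_eq (Finset.sum_congr rfl fun i _ => ?_)) key
  rw [finrank_lamPiece]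
  exact (LinearEquiv.ofEq _ _ (top_inf_eq _)).finrank_eq.symm

theorem finrank_map_mkQ_Ipiece_le {N : Submodule (ZMod p) (FreeL p d)}
    (hN : N ≤ ⨆ m, N ⊓ Lcomp p d m) {U : Submodule (ZMod p) (FreeLam p d)}
    (hU : U ≤ (N.baseChange (ZMod p)[X]).restrictScalars (ZMod p)) (n : ℕ) :
    Module.finrank (ZMod p) (U.map (Ipiece p d n).mkQ) ≤
      ∑ j ∈ Finset.range n, ∑ m ∈ Finset.range (j + 1),
        Module.finrank (ZMod p) ↥(N ⊓ Lcomp p d m) := by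
  have key := Submodule.finrank_map_mkQ_le_sum (hU.trans (baseChange_le_lamPiece_sup hN n))
  simp only [finrank_lamPiece] at key
  rwa [Finset.sum_sigma']

end LamPieces

theorem finrank_Lcomp_one_pos {p d : ℕ} [Fact p.Prime] (hd : 0 < d) :
    0 < Module.finrank (ZMod p) (Lcomp p d 1) :=
  Module.finrank_pos_iff_exists_ne_zero.2
    ⟨⟨_, of_mem_Lcomp_one ⟨0, hd⟩⟩, fun h => FreeLieAlgebra.of_ne_zero _ (congrArg Subtype.val h)⟩

/-- **Lemma 2.5.** Let `L` be the non-abelian free `F_p`-Lie algebra on `d ≥ 2` generators,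
regarded as an `F_p`-subalgebra of the free `F_p[π]`-Lie algebra `Λ` on the same generators
(via `x ↦ 1 ⊗ x`). Let `M` be a graded `F_p`-Lie subalgebra of `L` with strong density
`dens_L(M) = 0`. Then the `F_p[π]`-Lie subalgebra `H` of `Λ` generated by `M` has strong
density `dens_Λ(H) = 0`. -/
theorem strong_density_zero_transfer
    (p d : ℕ) [Fact p.Prime] (hd : 2 ≤ d)
    (M : LieSubalgebra (ZMod p) (FreeL p d))
    (hgraded : M.toSubmodule = ⨆ n : ℕ, M.toSubmodule ⊓ Lcomp p d n)
    (hdens : Filter.Tendsto (densLRatio p d M.toSubmodule) Filter.atTop (nhds 0)) :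
    Filter.Tendsto
      (densLamRatio p d
        (Submodule.restrictScalars (ZMod p)
          (LieSubalgebra.lieSpan (Polynomial (ZMod p)) (FreeLam p d)
            { z : FreeLam p d | ∃ x ∈ M, z = (1 : Polynomial (ZMod p)) ⊗ₜ[ZMod p] x }).toSubmodule))
      Filter.atTop (nhds 0) :=
  tendsto_div_zero_of_iterated_sums (finrank_Lcomp_one_pos (by omega))
    (fun _ => Submodule.finrank_le _) hdens (sum_finrank_inf_Lcomp_le M.toSubmodule)
    finrank_quotient_Jpiece_le
    (finrank_map_mkQ_Ipiece_le hgraded.le <| Submodule.restrictScalars_mono _ <|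
      M.lieSpan_one_tmul_le_baseChange (A := Polynomial (ZMod p)))
    sum_finrank_Lcomp_le_finrank_quotient_Ipiece
end

section
/- Let G be a finitely generated pro-p group and let L be a ℤ_p-lattice (a free ℤ_p-module of finite rank) equipped with a continuous ℤ_p-linear right G-action. Then the rigidity r(L) is finite if and only if ℚ_p ⊗_{ℤ_p} L is a simple ℚ_p G-module. -/
/-!
Write `V = ℚ_p ⊗ L`. If `W` is a proper nonzero `G`-stable subspace of `V`, then `M₀ = L ∩ W`
is a saturated `G`-stable sublattice with `M₀ + pL ≠ L` (Nakayama), and the open submodules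
`M₀ + p^n L` have `u = 0` but `ℓ ≥ n`.

Conversely, if `V` is simple, the `ℚ_p`-span of the orbit of any `x ≠ 0` is `V`, so the
`ℤ_p`-span of the orbit contains some `p^c L`. By Nakayama this only depends on `x` modulo
`p^(c+1) L`, so by compactness of `L ∖ pL ≅ ℤ_pⁿ ∖ pℤ_pⁿ` one `C` works for all `x ∉ pL`.
An element of `M` outside `p^(u+1) L`, `u = u_L(M)`, is `p^u x` with `x ∉ pL`, whence
`p^(u+C) L ⊆ M`.
-/

open Filter Topology
open scoped TensorProduct

/-- A profinite group that is pro-`p`. -/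
def IsProPGroup (p : ℕ) (G : Type*) [Group G] [TopologicalSpace G] : Prop :=
  CompactSpace G ∧ T2Space G ∧ TotallyDisconnectedSpace G ∧
    ∀ N : Subgroup G, N.Normal → IsOpen (N : Set G) → ∃ k : ℕ, N.index = p ^ k

/-- Topologically finitely generated. -/
def IsTopFG (G : Type*) [Group G] [TopologicalSpace G] [IsTopologicalGroup G] : Prop :=
  ∃ s : Finset G, (Subgroup.closure (s : Set G)).topologicalClosure = ⊤

variable (p : ℕ) [Fact p.Prime]

/-- The sublattice `p^k L` of a `ℤ_p`-lattice `L`. -/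
noncomputable def pPowLat (L : Type*) [AddCommGroup L] [Module ℤ_[p] L] (k : ℕ) :
    Submodule ℤ_[p] L :=
  LinearMap.range (((p : ℤ_[p]) ^ k) • (LinearMap.id : L →ₗ[ℤ_[p]] L))

/-- `ℓ_L(M) = min { k : p^k L ⊆ M }`. -/
noncomputable def ellLat (L : Type*) [AddCommGroup L] [Module ℤ_[p] L]
    (M : Submodule ℤ_[p] L) : ℕ :=
  sInf { k : ℕ | pPowLat p L k ≤ M }

/-- `u_L(M) = max { k : M ⊆ p^k L }`. -/
noncomputable def uLat (L : Type*) [AddCommGroup L] [Module ℤ_[p] L]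
    (M : Submodule ℤ_[p] L) : ℕ :=
  sSup { k : ℕ | M ≤ pPowLat p L k }

section Lattice

variable {p} {L : Type*} [AddCommGroup L] [Module ℤ_[p] L]

lemma mem_pPowLat {k : ℕ} {x : L} :
    x ∈ pPowLat p L k ↔ ∃ y : L, (p : ℤ_[p]) ^ k • y = x := by
  simp [pPowLat]

lemma pow_smul_mem_pPowLat (k : ℕ) (y : L) : (p : ℤ_[p]) ^ k • y ∈ pPowLat p L k :=
  mem_pPowLat.2 ⟨y, rfl⟩

lemma pPowLat_eq_span_pow_smul_top (k : ℕ) :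
    pPowLat p L k = Ideal.span {(p : ℤ_[p])} ^ k • ⊤ := by
  ext x
  simp [mem_pPowLat, Ideal.span_singleton_pow, Submodule.ideal_span_singleton_smul,
    Submodule.mem_smul_pointwise_iff_exists]

lemma pPowLat_zero : pPowLat p L 0 = ⊤ := by
  simp [pPowLat_eq_span_pow_smul_top]

lemma pPowLat_antitone : Antitone (pPowLat p L) := fun _ _ h => by
  simp only [pPowLat_eq_span_pow_smul_top]
  exact Submodule.smul_mono_left (Ideal.pow_le_pow_right h)

lemma pow_smul_mem_pPowLat_add {j : ℕ} (k : ℕ) {x : L} (hx : x ∈ pPowLat p L j) :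
    (p : ℤ_[p]) ^ k • x ∈ pPowLat p L (k + j) := by
  obtain ⟨y, rfl⟩ := mem_pPowLat.1 hx
  rw [smul_smul, ← pow_add]
  exact pow_smul_mem_pPowLat _ y

lemma map_pPowLat_le (f : L →ₗ[ℤ_[p]] L) (k : ℕ) :
    (pPowLat p L k).map f ≤ pPowLat p L k := by
  rw [pPowLat_eq_span_pow_smul_top, Submodule.map_smul'']
  exact Submodule.smul_mono le_rfl le_top

lemma pPowLat_ne_bot [Nontrivial L] [Module.IsTorsionFree ℤ_[p] L] (k : ℕ) :
    pPowLat p L k ≠ ⊥ := by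
  obtain ⟨x, hx⟩ := exists_ne (0 : L)
  refine (Submodule.ne_bot_iff _).2 ⟨_, pow_smul_mem_pPowLat k x, ?_⟩
  exact smul_ne_zero (pow_ne_zero _ PadicInt.prime_p.ne_zero) hx

lemma mem_pPowLat_iff_repr_mem {ι : Type*} [Fintype ι] (b : Module.Basis ι ℤ_[p] L)
    {k : ℕ} {x : L} :
    x ∈ pPowLat p L k ↔ ∀ i, b.repr x i ∈ Ideal.span {(p : ℤ_[p]) ^ k} := by
  simp only [Ideal.mem_span_singleton']
  refine ⟨fun hx i => ?_, fun h => ?_⟩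
  · obtain ⟨y, rfl⟩ := mem_pPowLat.1 hx
    exact ⟨b.repr y i, by simp [mul_comm]⟩
  · choose c hc using h
    rw [← b.sum_repr x]
    refine Submodule.sum_mem _ fun i _ => ?_
    rw [← hc i, mul_comm, mul_smul]
    exact pow_smul_mem_pPowLat k _

variable [Module.Finite ℤ_[p] L]

lemma iInf_pPowLat : ⨅ k, pPowLat p L k = ⊥ := by
  simp only [pPowLat_eq_span_pow_smul_top]
  rw [← PadicInt.maximalIdeal_eq_span_p]
  exact Ideal.iInf_pow_smul_eq_bot_of_isLocalRing _ (IsLocalRing.maximalIdeal.isMaximal _).ne_top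

lemma pPowLat_le_of_le_sup_succ {M : Submodule ℤ_[p] L} {c : ℕ}
    (h : pPowLat p L c ≤ M ⊔ pPowLat p L (c + 1)) : pPowLat p L c ≤ M := by
  refine Submodule.le_of_le_smul_of_le_jacobson_bot (IsNoetherian.noetherian _)
    (PadicInt.maximalIdeal_eq_span_p (p := p) ▸ IsLocalRing.maximalIdeal_le_jacobson _) ?_
  simpa [pPowLat_eq_span_pow_smul_top, pow_succ', mul_smul] using h

end Lattice

section RigidityInvariants

variable {p} {L : Type*} [AddCommGroup L] [Module ℤ_[p] L] {M : Submodule ℤ_[p] L}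

lemma ellLat_le {k : ℕ} (h : pPowLat p L k ≤ M) : ellLat p L M ≤ k :=
  Nat.sInf_le h

lemma pPowLat_ellLat_le (h : ∃ k, pPowLat p L k ≤ M) : pPowLat p L (ellLat p L M) ≤ M :=
  Nat.sInf_mem h

variable [Module.Finite ℤ_[p] L]

lemma bddAbove_setOf_le_pPowLat (hM : M ≠ ⊥) : BddAbove {k | M ≤ pPowLat p L k} := by
  by_contra h
  refine hM (eq_bot_iff.2 (iInf_pPowLat (p := p) (L := L) ▸ le_iInf fun k => ?_))
  obtain ⟨j, hj, hkj⟩ := not_bddAbove_iff.1 h k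
  exact hj.trans (pPowLat_antitone hkj.le)

lemma le_pPowLat_uLat (hM : M ≠ ⊥) : M ≤ pPowLat p L (uLat p L M) :=
  Nat.sSup_mem ⟨0, by simp [pPowLat_zero]⟩ (bddAbove_setOf_le_pPowLat hM)

lemma not_le_pPowLat_uLat_succ (hM : M ≠ ⊥) : ¬ M ≤ pPowLat p L (uLat p L M + 1) := fun h =>
  (le_csSup (bddAbove_setOf_le_pPowLat hM) h).not_gt (Nat.lt_succ_self _)

lemma uLat_eq_zero (h : ¬ M ≤ pPowLat p L 1) : uLat p L M = 0 := by
  by_contra hu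
  have hM : M ≠ ⊥ := by rintro rfl; exact h bot_le
  exact h ((le_pPowLat_uLat hM).trans (pPowLat_antitone (Nat.one_le_iff_ne_zero.2 hu)))

lemma exists_pow_uLat_smul_mem (hM : M ≠ ⊥) :
    ∃ x ∉ pPowLat p L 1, (p : ℤ_[p]) ^ uLat p L M • x ∈ M := by
  obtain ⟨y, hyM, hy⟩ := SetLike.not_le_iff_exists.1 (not_le_pPowLat_uLat_succ hM)
  obtain ⟨x, rfl⟩ := mem_pPowLat.1 (le_pPowLat_uLat hM hyM)
  refine ⟨x, fun hx => hy ?_, hyM⟩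
  simpa only [add_comm] using pow_smul_mem_pPowLat_add (uLat p L M) hx

end RigidityInvariants

section Orbit

variable {p} {G : Type*} [Monoid G] {L : Type*} [AddCommGroup L] [Module ℤ_[p] L]
  {ρ : G →* (L ≃ₗ[ℤ_[p]] L)}

variable (ρ) in
def IsInvariantSubmodule (M : Submodule ℤ_[p] L) : Prop :=
  ∀ g, M.map (ρ g : L →ₗ[ℤ_[p]] L) ≤ M

variable (ρ) in
lemma isInvariantSubmodule_pPowLat (k : ℕ) : IsInvariantSubmodule ρ (pPowLat p L k) :=
  fun _ => map_pPowLat_le _ k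

lemma IsInvariantSubmodule.sup {M N : Submodule ℤ_[p] L} (hM : IsInvariantSubmodule ρ M)
    (hN : IsInvariantSubmodule ρ N) : IsInvariantSubmodule ρ (M ⊔ N) := fun g => by
  rw [Submodule.map_sup]
  exact sup_le_sup (hM g) (hN g)

lemma IsInvariantSubmodule.comap_smul {M : Submodule ℤ_[p] L} (hM : IsInvariantSubmodule ρ M)
    (r : ℤ_[p]) : IsInvariantSubmodule ρ (M.comap (r • LinearMap.id)) := by
  rintro g _ ⟨x, hx, rfl⟩
  simpa using hM g ⟨_, hx, rfl⟩

variable (ρ) in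
noncomputable def orbitSpan (x : L) : Submodule ℤ_[p] L :=
  Submodule.span ℤ_[p] (Set.range fun g => ρ g x)

variable (ρ) in
lemma mem_orbitSpan_self (x : L) : x ∈ orbitSpan ρ x :=
  Submodule.subset_span ⟨1, by simp⟩

variable (ρ) in
lemma isInvariantSubmodule_orbitSpan (x : L) : IsInvariantSubmodule ρ (orbitSpan ρ x) := by
  intro g
  rw [orbitSpan, Submodule.map_span, Submodule.span_le]
  rintro _ ⟨_, ⟨h, rfl⟩, rfl⟩
  exact Submodule.subset_span ⟨g * h, by simp⟩

lemma orbitSpan_le {M : Submodule ℤ_[p] L} (hM : IsInvariantSubmodule ρ M) {x : L}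
    (hx : x ∈ M) : orbitSpan ρ x ≤ M := by
  rw [orbitSpan, Submodule.span_le]
  rintro _ ⟨g, rfl⟩
  exact hM g ⟨x, hx, rfl⟩

lemma pPowLat_add_le {M : Submodule ℤ_[p] L} (hM : IsInvariantSubmodule ρ M) {x : L} {u C : ℕ}
    (hx : (p : ℤ_[p]) ^ u • x ∈ M) (hC : pPowLat p L C ≤ orbitSpan ρ x) :
    pPowLat p L (u + C) ≤ M := by
  intro y hy
  obtain ⟨z, rfl⟩ := mem_pPowLat.1 hy
  rw [pow_add, mul_smul]
  exact orbitSpan_le (hM.comap_smul _) (by simpa using hx) (hC (pow_smul_mem_pPowLat C z))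

variable [Module.Finite ℤ_[p] L]

lemma pPowLat_le_orbitSpan_of_sub_mem {x y : L} {c : ℕ} (h : pPowLat p L c ≤ orbitSpan ρ x)
    (hxy : y - x ∈ pPowLat p L (c + 1)) : pPowLat p L c ≤ orbitSpan ρ y := by
  refine pPowLat_le_of_le_sup_succ (h.trans (orbitSpan_le
    ((isInvariantSubmodule_orbitSpan ρ y).sup (isInvariantSubmodule_pPowLat ρ _)) ?_))
  rw [← sub_sub_cancel y x]
  exact Submodule.sub_mem _ (Submodule.mem_sup_left (mem_orbitSpan_self ρ y))
    (Submodule.mem_sup_right hxy)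

lemma ellLat_le_uLat_add {C : ℕ}
    (hC : ∀ x ∉ pPowLat p L 1, pPowLat p L C ≤ orbitSpan ρ x) {M : Submodule ℤ_[p] L}
    (hM : IsInvariantSubmodule ρ M) (hM₀ : M ≠ ⊥) : ellLat p L M ≤ uLat p L M + C := by
  obtain ⟨x, hx, hxM⟩ := exists_pow_uLat_smul_mem hM₀
  exact ellLat_le (pPowLat_add_le hM hxM (hC x hx))

end Orbit

lemma IsCompact.eventually_forall_of_forall_eventually_prod {X Y : Type*} [TopologicalSpace Y]
    {K : Set Y} (hK : IsCompact K) {l : Filter X} {P : X → Y → Prop}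
    (hP : ∀ y ∈ K, ∀ᶠ z in l ×ˢ 𝓝 y, P z.1 z.2) : ∀ᶠ x in l, ∀ y ∈ K, P x y :=
  (Filter.Eventually.curry (hK.mem_prod_nhdsSet_of_forall hP)).mono fun _ h =>
    h.self_of_nhdsSet

section Compactness

variable {p}

lemma PadicInt.isOpen_span_pow_p (k : ℕ) :
    IsOpen (Ideal.span {(p : ℤ_[p]) ^ k} : Set ℤ_[p]) := by
  have h : (Ideal.span {(p : ℤ_[p]) ^ k} : Set ℤ_[p]) =
      Metric.closedBall 0 ((p : ℝ) ^ (-k : ℤ)) := by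
    ext x
    rw [SetLike.mem_coe, ← PadicInt.norm_le_pow_iff_mem_span_pow, Metric.mem_closedBall,
      dist_zero_right]
  rw [h]
  exact IsUltrametricDist.isOpen_closedBall _
    (zpow_pos (by exact_mod_cast (Fact.out : p.Prime).pos) _).ne'

variable {L : Type*} [AddCommGroup L] [Module ℤ_[p] L] {ι : Type*} [Fintype ι]

lemma isOpen_setOf_equivFun_symm_mem_pPowLat (b : Module.Basis ι ℤ_[p] L) (k : ℕ) :
    IsOpen {v | b.equivFun.symm v ∈ pPowLat p L k} := by
  have h : {v | b.equivFun.symm v ∈ pPowLat p L k} =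
      Set.univ.pi fun _ => (Ideal.span {(p : ℤ_[p]) ^ k} : Set ℤ_[p]) := by
    ext v
    simp only [Set.mem_ofPred_eq, mem_pPowLat_iff_repr_mem b, ← b.equivFun_apply,
      LinearEquiv.apply_symm_apply, Set.mem_pi, Set.mem_univ, true_implies, SetLike.mem_coe]
  rw [h]
  exact isOpen_set_pi Set.finite_univ fun _ _ => PadicInt.isOpen_span_pow_p k

variable [Module.Free ℤ_[p] L] [Module.Finite ℤ_[p] L] {G : Type*} [Monoid G]

lemma exists_forall_pPowLat_le_orbitSpan {ρ : G →* (L ≃ₗ[ℤ_[p]] L)}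
    (h : ∀ x ∉ pPowLat p L 1, ∃ c, pPowLat p L c ≤ orbitSpan ρ x) :
    ∃ C, ∀ x ∉ pPowLat p L 1, pPowLat p L C ≤ orbitSpan ρ x := by
  let b := Module.Free.chooseBasis ℤ_[p] L
  let e := b.equivFun
  let K := {v | e.symm v ∉ pPowLat p L 1}
  have hK : IsCompact K :=
    (isOpen_setOf_equivFun_symm_mem_pPowLat b 1).isClosed_compl.isCompact
  have hloc : ∀ v ∈ K,
      ∀ᶠ z in atTop ×ˢ 𝓝 v, pPowLat p L z.1 ≤ orbitSpan ρ (e.symm z.2) := by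
    intro v hv
    obtain ⟨c, hc⟩ := h _ hv
    have hnhds : ∀ᶠ w in 𝓝 v, e.symm (w - v) ∈ pPowLat p L (c + 1) :=
      ((isOpen_setOf_equivFun_symm_mem_pPowLat b (c + 1)).preimage
        (continuous_sub_right v)).mem_nhds (by simp)
    filter_upwards [(eventually_ge_atTop c).prod_mk hnhds] with z ⟨hcz, hz⟩
    exact (pPowLat_antitone hcz).trans (pPowLat_le_orbitSpan_of_sub_mem hc (by simpa using hz))
  obtain ⟨C, hC⟩ := (hK.eventually_forall_of_forall_eventually_prod
    (P := fun c w => pPowLat p L c ≤ orbitSpan ρ (e.symm w)) hloc).exists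
  exact ⟨C, fun x hx => by simpa using hC (e x) (by simpa [K] using hx)⟩

end Compactness

section Saturation

variable {p} {L : Type*} [AddCommGroup L] [Module ℤ_[p] L] [Module.Finite ℤ_[p] L]
  {M₀ : Submodule ℤ_[p] L}

lemma uLat_sup_eq_zero (hsat : ∀ (k : ℕ) (x : L), (p : ℤ_[p]) ^ k • x ∈ M₀ → x ∈ M₀)
    (hM₀ : M₀ ≠ ⊥) (N : Submodule ℤ_[p] L) : uLat p L (M₀ ⊔ N) = 0 := by
  obtain ⟨x, hx, hxM⟩ := exists_pow_uLat_smul_mem hM₀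
  exact uLat_eq_zero fun h => hx (h (Submodule.mem_sup_left (hsat _ x hxM)))

lemma le_ellLat_sup_pPowLat (hsat : ∀ (k : ℕ) (x : L), (p : ℤ_[p]) ^ k • x ∈ M₀ → x ∈ M₀)
    (hM₀ : M₀ ≠ ⊤) (n : ℕ) : n ≤ ellLat p L (M₀ ⊔ pPowLat p L n) := by
  set j := ellLat p L (M₀ ⊔ pPowLat p L n)
  have hj : pPowLat p L j ≤ M₀ ⊔ pPowLat p L n := pPowLat_ellLat_le ⟨n, le_sup_right⟩
  by_contra! hjn
  -- saturation turns `p^j L ≤ M₀ ⊔ p^n L` with `j < n` into `M₀ ⊔ p L = L`, so Nakayama applies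
  refine hM₀ (eq_top_iff.2 (pPowLat_zero (p := p) (L := L) ▸
    pPowLat_le_of_le_sup_succ fun x _ => ?_))
  obtain ⟨m, hm, _, hz, hmz⟩ := Submodule.mem_sup.1 (hj (pow_smul_mem_pPowLat j x))
  obtain ⟨z, rfl⟩ := mem_pPowLat.1 hz
  have hz' : (p : ℤ_[p]) ^ (n - j) • z ∈ pPowLat p L (0 + 1) :=
    pPowLat_antitone (by omega) (pow_smul_mem_pPowLat _ z)
  have hxz : (p : ℤ_[p]) ^ j • (x - (p : ℤ_[p]) ^ (n - j) • z) = m := by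
    rw [smul_sub, smul_smul, ← pow_add, Nat.add_sub_cancel' hjn.le, ← hmz, add_sub_cancel_right]
  rw [← sub_add_cancel x ((p : ℤ_[p]) ^ (n - j) • z)]
  exact Submodule.add_mem_sup (hsat j _ (hxz ▸ hm)) hz'

end Saturation

section BaseChange

variable {p} {L : Type*} [AddCommGroup L] [Module ℤ_[p] L]

lemma Submodule.smul_mem_iff_of_ne_zero {V : Type*} [AddCommGroup V] [Module ℚ_[p] V]
    [Module ℤ_[p] V] [IsScalarTower ℤ_[p] ℚ_[p] V] (W : Submodule ℚ_[p] V) {s : ℤ_[p]}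
    (hs : s ≠ 0) {v : V} : s • v ∈ W ↔ v ∈ W := by
  rw [← algebraMap_smul ℚ_[p] s v]
  exact W.smul_mem_iff (by simpa using hs)

lemma exists_smul_eq_one_tmul (v : ℚ_[p] ⊗[ℤ_[p]] L) :
    ∃ s : ℤ_[p], s ≠ 0 ∧ ∃ x : L, s • v = 1 ⊗ₜ x := by
  obtain ⟨⟨x, s⟩, h⟩ :=
    IsLocalizedModule.surj (nonZeroDivisors ℤ_[p]) (TensorProduct.mk ℤ_[p] ℚ_[p] L 1) v
  exact ⟨s, nonZeroDivisors.coe_ne_zero s, x, h⟩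

lemma one_tmul_injective [Module.IsTorsionFree ℤ_[p] L] :
    Function.Injective (TensorProduct.mk ℤ_[p] ℚ_[p] L 1) := by
  refine (injective_iff_map_eq_zero _).2 fun x hx => ?_
  obtain ⟨s, hs⟩ := (IsLocalizedModule.eq_zero_iff (nonZeroDivisors ℤ_[p]) _).1 hx
  exact (smul_eq_zero.1 hs).resolve_left (nonZeroDivisors.coe_ne_zero s)

lemma nontrivial_tensor_iff [Module.IsTorsionFree ℤ_[p] L] :
    Nontrivial (ℚ_[p] ⊗[ℤ_[p]] L) ↔ Nontrivial L := by
  refine ⟨fun h => ?_, fun _ => one_tmul_injective.nontrivial⟩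
  by_contra hL
  have := not_nontrivial_iff_subsingleton.1 hL
  exact not_nontrivial _ h

/-- `L ∩ W`. -/
noncomputable def latticeInter (W : Submodule ℚ_[p] (ℚ_[p] ⊗[ℤ_[p]] L)) : Submodule ℤ_[p] L :=
  (W.restrictScalars ℤ_[p]).comap (TensorProduct.mk ℤ_[p] ℚ_[p] L 1)

variable {W : Submodule ℚ_[p] (ℚ_[p] ⊗[ℤ_[p]] L)}

lemma mem_latticeInter {x : L} : x ∈ latticeInter W ↔ 1 ⊗ₜ x ∈ W := Iff.rfl

lemma smul_mem_latticeInter_iff {s : ℤ_[p]} (hs : s ≠ 0) {x : L} :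
    s • x ∈ latticeInter W ↔ x ∈ latticeInter W := by
  rw [mem_latticeInter, mem_latticeInter, TensorProduct.tmul_smul,
    W.smul_mem_iff_of_ne_zero hs]

lemma mem_latticeInter_of_pow_smul_mem (k : ℕ) (x : L)
    (h : (p : ℤ_[p]) ^ k • x ∈ latticeInter W) : x ∈ latticeInter W :=
  (smul_mem_latticeInter_iff (pow_ne_zero k PadicInt.prime_p.ne_zero)).1 h

lemma latticeInter_ne_bot (hW : W ≠ ⊥) : latticeInter W ≠ ⊥ := by
  obtain ⟨v, hvW, hv⟩ := (Submodule.ne_bot_iff W).1 hW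
  obtain ⟨s, hs, x, hsv⟩ := exists_smul_eq_one_tmul v
  refine (Submodule.ne_bot_iff _).2 ⟨x, mem_latticeInter.2 (hsv ▸ W.smul_mem s hvW), ?_⟩
  rintro rfl
  rw [TensorProduct.tmul_zero, ← Submodule.mem_bot ℚ_[p],
    Submodule.smul_mem_iff_of_ne_zero _ hs, Submodule.mem_bot] at hsv
  exact hv hsv

lemma latticeInter_ne_top (hW : W ≠ ⊤) : latticeInter W ≠ ⊤ := by
  refine fun h => hW (eq_top_iff.2 fun v _ => ?_)
  obtain ⟨s, hs, x, hsv⟩ := exists_smul_eq_one_tmul v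
  rw [← W.smul_mem_iff_of_ne_zero hs, hsv, ← mem_latticeInter, h]
  exact Submodule.mem_top

lemma isInvariantSubmodule_latticeInter {G : Type*} [Monoid G] {ρ : G →* (L ≃ₗ[ℤ_[p]] L)}
    (hW : ∀ g : G, W.map (LinearMap.baseChange ℚ_[p] (ρ g : L →ₗ[ℤ_[p]] L)) ≤ W) :
    IsInvariantSubmodule ρ (latticeInter W) := by
  rintro g _ ⟨x, hx, rfl⟩
  exact hW g ⟨_, hx, by simp⟩

end BaseChange

section Simple

variable {p} {L : Type*} [AddCommGroup L] [Module ℤ_[p] L] [Module.Finite ℤ_[p] L]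

lemma exists_pPowLat_le_of_forall_exists_smul_mem {N : Submodule ℤ_[p] L}
    (h : ∀ x : L, ∃ s : ℤ_[p], s ≠ 0 ∧ s • x ∈ N) : ∃ c, pPowLat p L c ≤ N := by
  have htors : Module.IsTorsion ℤ_[p] (L ⧸ N) := by
    rintro ⟨x⟩
    obtain ⟨s, hs, hsx⟩ := h x
    exact ⟨⟨s, mem_nonZeroDivisors_of_ne_zero hs⟩, (Submodule.Quotient.mk_eq_zero N).2 hsx⟩
  obtain ⟨s, hsann, hs⟩ := Submodule.annihilator_top_inter_nonZeroDivisors htors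
  obtain ⟨c, hc⟩ := PadicInt.ideal_eq_span_pow_p
    ((Submodule.ne_bot_iff _).2 ⟨s, hsann, nonZeroDivisors.ne_zero hs⟩)
  have hpc : (p : ℤ_[p]) ^ c ∈ (⊤ : Submodule ℤ_[p] (L ⧸ N)).annihilator :=
    hc ▸ Ideal.mem_span_singleton_self _
  refine ⟨c, fun y hy => ?_⟩
  obtain ⟨x, rfl⟩ := mem_pPowLat.1 hy
  exact (Submodule.Quotient.mk_eq_zero N).1
    (Submodule.mem_annihilator.1 hpc (Submodule.Quotient.mk x) Submodule.mem_top)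

variable [Module.IsTorsionFree ℤ_[p] L]

lemma exists_pPowLat_le_of_span_eq_top {N : Submodule ℤ_[p] L}
    (h : Submodule.span ℚ_[p] (TensorProduct.mk ℤ_[p] ℚ_[p] L 1 '' N) = ⊤) :
    ∃ c, pPowLat p L c ≤ N := by
  refine exists_pPowLat_le_of_forall_exists_smul_mem fun x => ?_
  have hx : 1 ⊗ₜ x ∈
      N.localized' ℚ_[p] (nonZeroDivisors ℤ_[p]) (TensorProduct.mk ℤ_[p] ℚ_[p] L 1) := by
    rw [Submodule.localized'_eq_span, h]
    exact Submodule.mem_top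
  obtain ⟨m, hm, s, hms⟩ := (Submodule.mem_localized' _ _ _ _ _).1 hx
  rw [IsLocalizedModule.mk'_eq_iff, Submonoid.smul_def, ← TensorProduct.tmul_smul] at hms
  exact ⟨s, nonZeroDivisors.coe_ne_zero s, one_tmul_injective (p := p) hms ▸ hm⟩

lemma exists_pPowLat_le_orbitSpan {G : Type*} [Monoid G] {ρ : G →* (L ≃ₗ[ℤ_[p]] L)}
    (hsimple : ∀ W : Submodule ℚ_[p] (ℚ_[p] ⊗[ℤ_[p]] L),
      (∀ g : G, W.map (LinearMap.baseChange ℚ_[p] (ρ g : L →ₗ[ℤ_[p]] L)) ≤ W) → W = ⊥ ∨ W = ⊤)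
    {x : L} (hx : x ≠ 0) : ∃ c, pPowLat p L c ≤ orbitSpan ρ x := by
  refine exists_pPowLat_le_of_span_eq_top ((hsimple _ fun g => ?_).resolve_left ?_)
  · rw [Submodule.map_span, Set.image_image]
    refine Submodule.span_mono fun _ ⟨y, hy, hyx⟩ => ⟨ρ g y, ?_, by simpa using hyx⟩
    exact isInvariantSubmodule_orbitSpan ρ x g ⟨y, hy, rfl⟩
  · refine (Submodule.ne_bot_iff _).2
      ⟨1 ⊗ₜ x, Submodule.subset_span ⟨x, mem_orbitSpan_self ρ x, rfl⟩, fun h => hx ?_⟩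
    exact one_tmul_injective (p := p) (h.trans (TensorProduct.tmul_zero _ _).symm)

end Simple

theorem rigidity_finite_iff_tensor_simple
    (G : Type) [Group G]
    (L : Type) [AddCommGroup L] [Module ℤ_[p] L] [Module.Free ℤ_[p] L] [Module.Finite ℤ_[p] L]
    (ρ : G →* (L ≃ₗ[ℤ_[p]] L)) :
    (Nontrivial L ∧ ∃ C : ℕ, ∀ M : Submodule ℤ_[p] L,
        (∃ k : ℕ, pPowLat p L k ≤ M) →
        (∀ g : G, M.map ((ρ g : L ≃ₗ[ℤ_[p]] L) : L →ₗ[ℤ_[p]] L) ≤ M) →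
        ellLat p L M ≤ uLat p L M + C) ↔
    (Nontrivial (ℚ_[p] ⊗[ℤ_[p]] L) ∧ ∀ W : Submodule ℚ_[p] (ℚ_[p] ⊗[ℤ_[p]] L),
        (∀ g : G, W.map (LinearMap.baseChange ℚ_[p]
            ((ρ g : L ≃ₗ[ℤ_[p]] L) : L →ₗ[ℤ_[p]] L)) ≤ W) →
        W = ⊥ ∨ W = ⊤) := by
  rw [nontrivial_tensor_iff]
  refine ⟨fun ⟨hL, C, hC⟩ => ⟨hL, fun W hW => ?_⟩, fun ⟨hL, hsimple⟩ => ⟨hL, ?_⟩⟩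
  · by_contra! hproper
    have hbound := hC (latticeInter W ⊔ pPowLat p L (C + 1)) ⟨C + 1, le_sup_right⟩
      ((isInvariantSubmodule_latticeInter hW).sup (isInvariantSubmodule_pPowLat ρ _))
    have hell := le_ellLat_sup_pPowLat mem_latticeInter_of_pow_smul_mem
      (latticeInter_ne_top hproper.2) (C + 1)
    rw [uLat_sup_eq_zero mem_latticeInter_of_pow_smul_mem (latticeInter_ne_bot hproper.1)]
      at hbound
    omega
  · obtain ⟨C, hC⟩ := exists_forall_pPowLat_le_orbitSpan fun x hx =>
      exists_pPowLat_le_orbitSpan hsimple fun h => hx (h ▸ Submodule.zero_mem _)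
    exact ⟨C, fun M ⟨k, hk⟩ hM =>
      ellLat_le_uLat_add hC hM (ne_bot_of_le_ne_bot (pPowLat_ne_bot k) hk)⟩
end

section
/- Let Γ be the free (discrete) group on x_1, …, x_d with d ≥ 2, let F be its pro-p completion, and let Λ = ⊕_{n≥1} Λ_n with Λ_n = P_n(F)/P_{n+1}(F) ≅ P_n(Γ)/P_{n+1}(Γ) be the graded F_p-Lie algebra associated to the lower p-series, with bracket induced by group commutators and operators induced by p-th powers. For any subgroup Δ ≤ Γ, the graded object gr(Δ) = ⊕_{n≥1} (Δ ∩ P_n(Γ))P_{n+1}(Γ)/P_{n+1}(Γ) is a graded Lie subalgebra of Λ closed under the p-power operators, and the topological closure Δ̄ of Δ in F satisfies hdim_F^L(Δ̄) = dens_Λ(gr(Δ)) = liminf_{n→∞} (Σ_{m=1}^{n−1} dim_{F_p} gr(Δ)_m) / (Σ_{m=1}^{n−1} dim_{F_p} Λ_m). -/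
open Filter Topology
open scoped commutatorElement

/-- A filtration series of a profinite group: a descending chain of open normal subgroups
starting at the whole group and with trivial intersection. -/
def IsFiltrationSeries {G : Type*} [Group G] [TopologicalSpace G] (S : ℕ → Subgroup G) : Prop :=
  S 0 = ⊤ ∧ (∀ i, (S i).Normal) ∧ (∀ i, IsOpen ((S i : Subgroup G) : Set G)) ∧
    (∀ i, S (i + 1) ≤ S i) ∧ (⨅ i, S i) = ⊥

/-- The Hausdorff dimension of a subgroup `H` with respect to a filtration series `S`:
`liminf_i log |H S_i : S_i| / log |G : S_i|`; note `|H S_i : S_i| = [H : H ∩ S_i]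
= Subgroup.relindex (S i) H` as each `S i` is normal. -/
noncomputable def hDim {G : Type*} [Group G] [TopologicalSpace G]
    (S : ℕ → Subgroup G) (H : Subgroup G) : ℝ :=
  Filter.liminf
    (fun i => Real.log (Subgroup.relIndex (S i) H : ℝ) / Real.log ((S i).index : ℝ))
    Filter.atTop

/-- `H` has strong Hausdorff dimension `r` w.r.t. `S` if the defining lower limit is a
proper limit. -/
def HasStrongHDim {G : Type*} [Group G] [TopologicalSpace G]
    (S : ℕ → Subgroup G) (H : Subgroup G) (r : ℝ) : Prop :=
  Filter.Tendsto
    (fun i => Real.log (Subgroup.relIndex (S i) H : ℝ) / Real.log ((S i).index : ℝ))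
    Filter.atTop (nhds r)

/-- The Hausdorff spectrum of `G` with respect to the filtration series `S`. -/
noncomputable def hSpec {G : Type*} [Group G] [TopologicalSpace G]
    (S : ℕ → Subgroup G) : Set ℝ :=
  { r | ∃ H : Subgroup G, IsClosed (H : Set G) ∧ hDim S H = r }

/-- The lower `p`-series of a topological group, indexed so that
`lowerPSeries p G 0 = P_1(G) = G` and
`lowerPSeries p G i = P_{i+1}(G) = closure (P_i(G)^p [P_i(G), G])`. -/
def lowerPSeries (p : ℕ) (G : Type*) [Group G] [TopologicalSpace G] [IsTopologicalGroup G] :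
    ℕ → Subgroup G
  | 0 => ⊤
  | i + 1 =>
      (Subgroup.closure ((fun x => x ^ p) '' ((lowerPSeries p G i : Subgroup G) : Set G)) ⊔
        ⁅lowerPSeries p G i, (⊤ : Subgroup G)⁆).topologicalClosure

/-- `F` is a free pro-`p` group on the generators `ι i`, `i : Fin d`: it is a pro-`p` group,
topologically generated by the `ι i`, and every map from the generators to a finite `p`-group
extends uniquely to a continuous (i.e. open-kernel) homomorphism. -/
def IsFreeProPGroupOn (p : ℕ) {F : Type*} [Group F] [TopologicalSpace F] [IsTopologicalGroup F]
    {d : ℕ} (ι : Fin d → F) : Prop :=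
  IsProPGroup p F ∧ (Subgroup.closure (Set.range ι)).topologicalClosure = ⊤ ∧
    ∀ (K : Type) (_ : Group K) (_ : Finite K), IsPGroup p K → ∀ f : Fin d → K,
      ∃! φ : F →* K, IsOpen ((MonoidHom.ker φ : Subgroup F) : Set F) ∧ ∀ i, φ (ι i) = f i

/-- `F` is a free pro-`p` group of rank `d`. -/
def IsFreeProPGroup (p d : ℕ) (F : Type*) [Group F] [TopologicalSpace F]
    [IsTopologicalGroup F] : Prop :=
  ∃ ι : Fin d → F, IsFreeProPGroupOn p ι

/-! `gr(Δ)` is closed under brackets and `p`-th powers because `D` is a subgroup and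
`[P_m, P_n] ≤ P_{m+n+1}`, `P_m^p ≤ P_{m+1}`. The commutator estimate is proved by induction on `n`:
modulo the closed normal subgroup `N = P_{m+n+2}`, the elements commuting with `P_m` form a closed
subgroup, and it contains the generators of `P_{n+1}` by the three subgroups lemma and the identity
`[a, x^p] = [a, x]^p` valid when `[a, x]` commutes with `x`.

For the dimension, every `P_n` has finite index, hence is open: inductively `P_n` contains a dense
finitely generated subgroup `Γ_n`; the image of `Γ_n` in the elementary abelian group `P_n/P_{n+1}`
is finite, hence closed, so it contains the image of `P_n`, and `Γ_n ∩ P_{n+1}` is again finitely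
generated (Schreier) and dense in `P_{n+1}`. Since `P_n` is open, `|D̄ P_n : P_n| = |D P_n : P_n|`,
and this index telescopes into the product of the `|(D ∩ P_m) P_{m+1} : P_{m+1}|`, `m < n`. -/

section Group

variable {G : Type*} [Group G]

theorem commutatorElement_pow_right_of_commute {a x : G} (h : Commute ⁅a, x⁆ x) (k : ℕ) :
    ⁅a, x ^ k⁆ = ⁅a, x⁆ ^ k := by
  have hconj : a * x * a⁻¹ = ⁅a, x⁆ * x := by rw [commutatorElement_def]; group
  rw [commutatorElement_def, ← conj_pow, hconj, h.mul_pow, mul_inv_cancel_right]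

theorem finite_of_fg_of_pow_eq_one [IsMulCommutative G] [Group.FG G] {p : ℕ} (hp : 0 < p)
    (h : ∀ g : G, g ^ p = 1) : Finite G := by
  open IsMulCommutative in
  exact CommGroup.finite_of_fg_isMulTorsion G fun g => isOfFinOrder_iff_pow_eq_one.2 ⟨p, hp, h g⟩

namespace Subgroup

theorem FG.map {G' : Type*} [Group G'] {H : Subgroup G} (hH : H.FG) (f : G →* G') :
    (H.map f).FG :=
  (fg_iff_submonoid_fg _).2 (((fg_iff_submonoid_fg _).1 hH).map f)

theorem FG.inf_of_finiteIndex {Γ N : Subgroup G} (hΓ : Γ.FG) [N.FiniteIndex] : (Γ ⊓ N).FG := by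
  have : Group.FG Γ := (Group.fg_iff_subgroup_fg Γ).2 hΓ
  have := ((Group.fg_iff_subgroup_fg (N.subgroupOf Γ)).1 inferInstance).map Γ.subtype
  rwa [subgroupOf_map_subtype, inf_comm] at this

theorem closure_normal_of_conj_mem {s : Set G} (h : ∀ g, ∀ x ∈ s, g * x * g⁻¹ ∈ s) :
    (closure s).Normal where
  conj_mem x hx g := by
    have : (closure s).map (MulAut.conj g).toMonoidHom ≤ closure s := by
      rw [MonoidHom.map_closure, closure_le]
      rintro _ ⟨y, hy, rfl⟩
      exact subset_closure (h g y hy)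
    exact this ⟨x, hx, rfl⟩

theorem commutator_commutator_le_of_rotate {H₁ H₂ H₃ N : Subgroup G} [N.Normal]
    (h₁ : ⁅⁅H₂, H₃⁆, H₁⁆ ≤ N) (h₂ : ⁅⁅H₃, H₁⁆, H₂⁆ ≤ N) : ⁅⁅H₁, H₂⁆, H₃⁆ ≤ N := by
  simp only [← QuotientGroup.ker_mk' N, ← map_eq_bot_iff, map_commutator] at *
  exact commutator_commutator_eq_bot_of_rotate h₁ h₂

theorem commutatorElement_pow_right_mem {N : Subgroup G} [N.Normal] {a x : G} {k : ℕ}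
    (hpow : ⁅a, x⁆ ^ k ∈ N) (hcomm : ⁅⁅a, x⁆, x⁆ ∈ N) : ⁅a, x ^ k⁆ ∈ N := by
  simp only [← QuotientGroup.eq_one_iff, ← QuotientGroup.mk'_apply, map_pow,
    map_commutatorElement] at *
  rwa [commutatorElement_pow_right_of_commute (commutatorElement_eq_one_iff_commute.1 hcomm)]

theorem mem_comap_centralizer_map_mk'_iff {H N : Subgroup G} [N.Normal] {y : G} :
    y ∈ (centralizer (H.map (QuotientGroup.mk' N) : Set (G ⧸ N))).comap (QuotientGroup.mk' N) ↔
      ∀ a ∈ H, ⁅a, y⁆ ∈ N := by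
  simp only [mem_comap, mem_centralizer_iff, coe_map, Set.forall_mem_image, SetLike.mem_coe,
    ← commutatorElement_eq_one_iff_mul_comm, QuotientGroup.mk'_apply]
  exact forall₂_congr fun a _ => QuotientGroup.eq_one_iff ⁅a, y⁆

theorem relIndex_eq_card_map_mk' (N : Subgroup G) [N.Normal] (L : Subgroup G) :
    N.relIndex L = Nat.card (L.map (QuotientGroup.mk' N)) := by
  rw [← relIndex_bot_left, ← relIndex_comap, MonoidHom.comap_bot, QuotientGroup.ker_mk']

theorem relIndex_eq_prod_relIndex_inf {S : ℕ → Subgroup G} (hS : Antitone S) (h0 : S 0 = ⊤)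
    (D : Subgroup G) (n : ℕ) :
    (S n).relIndex D = ∏ m ∈ Finset.range n, (S (m + 1)).relIndex (D ⊓ S m) := by
  induction n with
  | zero => simp [h0]
  | succ n ih =>
    rw [Finset.prod_range_succ, ← ih, mul_comm, inf_comm, relIndex_inf_mul_relIndex,
      inf_of_le_left (hS n.le_succ)]

theorem log_relIndex_eq_sum {S : ℕ → Subgroup G} (hS : Antitone S) (h0 : S 0 = ⊤)
    (hfin : ∀ m, (S m).FiniteIndex) (D : Subgroup G) (n : ℕ) :
    Real.log ((S n).relIndex D) =
      ∑ m ∈ Finset.range n, Real.log ((S (m + 1)).relIndex (D ⊓ S m)) := by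
  rw [relIndex_eq_prod_relIndex_inf hS h0, Nat.cast_prod, Real.log_prod]
  exact fun m _ => Nat.cast_ne_zero.2
    (isFiniteRelIndex_iff_relIndex_ne_zero.1 isFiniteRelIndex_of_finiteIndex)

end Subgroup

end Group

namespace Subgroup

variable {G : Type*} [Group G] [TopologicalSpace G] [IsTopologicalGroup G]

theorem isClosed_comap_centralizer_map_mk' (H N : Subgroup G) [N.Normal]
    (hN : IsClosed (N : Set G)) :
    IsClosed ((centralizer (H.map (QuotientGroup.mk' N) : Set (G ⧸ N))).comap
      (QuotientGroup.mk' N) : Set G) := by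
  have : IsClosed (N : Set G) := hN
  exact (Set.isClosed_centralizer _).preimage QuotientGroup.continuous_mk

theorem relIndex_ne_zero_of_le_topologicalClosure {Γ L N : Subgroup G} [N.Normal]
    (hN : IsClosed (N : Set G)) (hLL : ⁅L, L⁆ ≤ N) {p : ℕ} (hp : 0 < p)
    (hpow : ∀ x ∈ L, x ^ p ∈ N) (hΓ : Γ.FG) (hΓL : Γ ≤ L) (hLΓ : L ≤ Γ.topologicalClosure) :
    N.relIndex L ≠ 0 := by
  have : IsClosed (N : Set G) := hN
  set π := QuotientGroup.mk' N
  have : IsMulCommutative (Γ.map π) := ⟨⟨by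
    rintro ⟨_, x, hx, rfl⟩ ⟨_, y, hy, rfl⟩
    refine Subtype.ext ((commutatorElement_eq_one_iff_mul_comm).1 ?_)
    rw [← map_commutatorElement, QuotientGroup.mk'_apply, QuotientGroup.eq_one_iff]
    exact hLL (commutator_mem_commutator (hΓL hx) (hΓL hy))⟩⟩
  have : Group.FG (Γ.map π) := (Group.fg_iff_subgroup_fg _).2 (hΓ.map π)
  have : Finite (Γ.map π) := finite_of_fg_of_pow_eq_one hp <| by
    rintro ⟨_, x, hx, rfl⟩
    refine Subtype.ext ?_
    rw [SubgroupClass.coe_pow, ← map_pow, OneMemClass.coe_one, QuotientGroup.mk'_apply,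
      QuotientGroup.eq_one_iff]
    exact hpow x (hΓL hx)
  have hmap : L.map π ≤ Γ.map π := by
    calc (L.map π : Set (G ⧸ N)) ⊆ π '' _root_.closure Γ := Set.image_mono hLΓ
      _ ⊆ _root_.closure (π '' Γ) :=
        image_closure_subset_closure_image QuotientGroup.continuous_mk
      _ = π '' Γ := (Set.toFinite (Γ.map π : Set (G ⧸ N))).isClosed.closure_eq
  rw [relIndex_eq_card_map_mk']
  have : Finite (L.map π) := Finite.of_injective _ (inclusion_injective hmap)
  exact Nat.card_ne_zero.2 ⟨inferInstance, inferInstance⟩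

theorem le_topologicalClosure_inf_of_isOpen {Γ N : Subgroup G} (hN : IsOpen (N : Set G))
    (hNΓ : N ≤ Γ.topologicalClosure) : N ≤ (Γ ⊓ N).topologicalClosure := fun x hx => by
  have := hN.inter_closure ⟨hx, hNΓ hx⟩
  rwa [Set.inter_comm] at this

theorem relIndex_topologicalClosure {S : Subgroup G} [S.Normal] (hS : IsOpen (S : Set G))
    (D : Subgroup G) :
    S.relIndex D.topologicalClosure = S.relIndex D := by
  have hclosed : IsClosed ((D ⊔ S : Subgroup G) : Set G) :=
    isClosed_of_isOpen _ (isOpen_mono le_sup_right hS)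
  have : D.topologicalClosure ⊔ S = D ⊔ S := le_antisymm
    (sup_le (D.topologicalClosure_minimal le_sup_left hclosed) le_sup_right)
    (sup_le_sup_right D.le_topologicalClosure S)
  rw [← relIndex_sup_right, this, relIndex_sup_right]

end Subgroup

namespace lowerPSeries

variable {p : ℕ} {F : Type*} [Group F] [TopologicalSpace F] [IsTopologicalGroup F]

theorem zero : lowerPSeries p F 0 = ⊤ := rfl

theorem succ (n : ℕ) : lowerPSeries p F (n + 1) =
    (Subgroup.closure ((· ^ p) '' (lowerPSeries p F n : Set F)) ⊔
      ⁅lowerPSeries p F n, ⊤⁆).topologicalClosure := rfl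

theorem isClosed (n : ℕ) : IsClosed (lowerPSeries p F n : Set F) := by
  cases n with
  | zero => exact isClosed_univ
  | succ n => exact Subgroup.isClosed_topologicalClosure _

instance normal (n : ℕ) : (lowerPSeries p F n).Normal := by
  induction n with
  | zero => exact Subgroup.normal_top
  | succ n ih =>
    have : (Subgroup.closure ((· ^ p) '' (lowerPSeries p F n : Set F))).Normal :=
      Subgroup.closure_normal_of_conj_mem <| by
        rintro g _ ⟨y, hy, rfl⟩
        exact ⟨g * y * g⁻¹, ih.conj_mem y hy g, conj_pow⟩
    rw [succ]
    exact Subgroup.is_normal_topologicalClosure _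

theorem pow_mem {n : ℕ} {x : F} (hx : x ∈ lowerPSeries p F n) :
    x ^ p ∈ lowerPSeries p F (n + 1) :=
  Subgroup.le_topologicalClosure _ (Subgroup.mem_sup_left (Subgroup.subset_closure ⟨x, hx, rfl⟩))

theorem commutator_top_le (n : ℕ) : ⁅lowerPSeries p F n, ⊤⁆ ≤ lowerPSeries p F (n + 1) :=
  le_sup_right.trans (Subgroup.le_topologicalClosure _)

theorem antitone : Antitone (lowerPSeries p F) := by
  refine antitone_nat_of_succ_le fun n => ?_
  refine Subgroup.topologicalClosure_minimal _ (sup_le ?_ (Subgroup.commutator_le_left _ _))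
    (isClosed n)
  rw [Subgroup.closure_le]
  rintro _ ⟨y, hy, rfl⟩
  exact Subgroup.pow_mem _ hy p

theorem commutator_le (m n : ℕ) :
    ⁅lowerPSeries p F m, lowerPSeries p F n⁆ ≤ lowerPSeries p F (m + n + 1) := by
  induction n generalizing m with
  | zero => exact commutator_top_le m
  | succ n ih =>
    set N := lowerPSeries p F (m + (n + 1) + 1)
    have hle {k : ℕ} (hk : m + n + 2 ≤ k) : lowerPSeries p F k ≤ N := antitone hk
    have h3 : ⁅lowerPSeries p F m, ⁅lowerPSeries p F n, ⊤⁆⁆ ≤ N := by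
      rw [Subgroup.commutator_comm]
      refine Subgroup.commutator_commutator_le_of_rotate ?_ ?_
      · calc ⁅⁅⊤, lowerPSeries p F m⁆, lowerPSeries p F n⁆
            ≤ ⁅lowerPSeries p F (m + 1), lowerPSeries p F n⁆ := by
              rw [Subgroup.commutator_comm (⊤ : Subgroup F)]
              exact Subgroup.commutator_mono (commutator_top_le m) le_rfl
          _ ≤ N := (ih (m + 1)).trans (hle (by omega))
      · calc ⁅⁅lowerPSeries p F m, lowerPSeries p F n⁆, ⊤⁆
            ≤ lowerPSeries p F (m + n + 1 + 1) :=
              (Subgroup.commutator_mono (ih m) le_rfl).trans (commutator_top_le _)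
          _ ≤ N := hle (by omega)
    suffices lowerPSeries p F (n + 1) ≤ (Subgroup.centralizer
        ((lowerPSeries p F m).map (QuotientGroup.mk' N) : Set (F ⧸ N))).comap
          (QuotientGroup.mk' N) by
      rw [Subgroup.commutator_le]
      exact fun a ha b hb => Subgroup.mem_comap_centralizer_map_mk'_iff.1 (this hb) a ha
    refine Subgroup.topologicalClosure_minimal _ (sup_le ?_ ?_)
      (Subgroup.isClosed_comap_centralizer_map_mk' _ _ (isClosed _))
    · rw [Subgroup.closure_le]
      rintro _ ⟨x, hx, rfl⟩
      refine Subgroup.mem_comap_centralizer_map_mk'_iff.2 fun a ha => ?_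
      have hax : ⁅a, x⁆ ∈ lowerPSeries p F (m + n + 1) :=
        ih m (Subgroup.commutator_mem_commutator ha hx)
      exact Subgroup.commutatorElement_pow_right_mem (hle le_rfl (pow_mem hax))
        (hle (by omega) (ih _ (Subgroup.commutator_mem_commutator hax hx)))
    · rw [Subgroup.commutator_le]
      exact fun y hy g _ => Subgroup.mem_comap_centralizer_map_mk'_iff.2 fun a ha =>
        h3 (Subgroup.commutator_mem_commutator ha
          (Subgroup.commutator_mem_commutator hy (Subgroup.mem_top g)))

theorem finiteIndex_and_exists_fg_dense (hp : 0 < p) {Γ : Subgroup F} (hΓ : Γ.FG)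
    (hdense : Γ.topologicalClosure = ⊤) (n : ℕ) :
    (lowerPSeries p F n).FiniteIndex ∧ ∃ Γ' : Subgroup F, Γ'.FG ∧
      Γ' ≤ lowerPSeries p F n ∧ lowerPSeries p F n ≤ Γ'.topologicalClosure := by
  induction n with
  | zero => exact ⟨inferInstanceAs (⊤ : Subgroup F).FiniteIndex, Γ, hΓ, le_top, hdense.ge⟩
  | succ n ih =>
    obtain ⟨hfin, Γ', hΓ', hΓ'le, hleΓ'⟩ := ih
    have hrel : (lowerPSeries p F (n + 1)).relIndex (lowerPSeries p F n) ≠ 0 :=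
      Subgroup.relIndex_ne_zero_of_le_topologicalClosure (isClosed _)
        ((Subgroup.commutator_mono le_rfl le_top).trans (commutator_top_le n)) hp
        (fun _ => pow_mem) hΓ' hΓ'le hleΓ'
    have : (lowerPSeries p F (n + 1)).FiniteIndex :=
      ⟨by rw [← Subgroup.relIndex_mul_index (antitone n.le_succ)]
          exact mul_ne_zero hrel hfin.index_ne_zero⟩
    have hopen := (lowerPSeries p F (n + 1)).isOpen_of_isClosed_of_finiteIndex (isClosed _)
    exact ⟨this, Γ' ⊓ lowerPSeries p F (n + 1), hΓ'.inf_of_finiteIndex, inf_le_right,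
      Subgroup.le_topologicalClosure_inf_of_isOpen hopen ((antitone n.le_succ).trans hleΓ')⟩

theorem finiteIndex (hp : 0 < p) {Γ : Subgroup F} (hΓ : Γ.FG) (hdense : Γ.topologicalClosure = ⊤)
    (n : ℕ) : (lowerPSeries p F n).FiniteIndex :=
  (finiteIndex_and_exists_fg_dense hp hΓ hdense n).1

end lowerPSeries

theorem gr_subalgebra_and_hdim_eq_density_general
    (p d : ℕ) (hp : p.Prime)
    (F : Type) [Group F] [TopologicalSpace F] [IsTopologicalGroup F]
    (ι : Fin d → F) (hF : IsFreeProPGroupOn p ι)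
    (Δ : Subgroup (FreeGroup (Fin d))) :
    (∀ m n : ℕ, ∀ a ∈ Δ.map (FreeGroup.lift ι) ⊓ lowerPSeries p F m,
      ∀ b ∈ Δ.map (FreeGroup.lift ι) ⊓ lowerPSeries p F n,
        ⁅a, b⁆ ∈ (Δ.map (FreeGroup.lift ι) ⊓ lowerPSeries p F (m + n + 1)) ⊔
          lowerPSeries p F (m + n + 2)) ∧
    (∀ m : ℕ, ∀ a ∈ Δ.map (FreeGroup.lift ι) ⊓ lowerPSeries p F m,
        a ^ p ∈ (Δ.map (FreeGroup.lift ι) ⊓ lowerPSeries p F (m + 1)) ⊔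
          lowerPSeries p F (m + 2)) ∧
    hDim (lowerPSeries p F) (Δ.map (FreeGroup.lift ι)).topologicalClosure =
      Filter.liminf
        (fun n : ℕ =>
          (∑ m ∈ Finset.range n,
            Real.log (Subgroup.relIndex (lowerPSeries p F (m + 1))
              (Δ.map (FreeGroup.lift ι) ⊓ lowerPSeries p F m) : ℝ)) /
          (∑ m ∈ Finset.range n,
            Real.log (Subgroup.relIndex (lowerPSeries p F (m + 1))
              (lowerPSeries p F m) : ℝ)))
        Filter.atTop := by
  refine ⟨fun m n a ha b hb => Subgroup.mem_sup_left ⟨Subgroup.commutator_le_self _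
      (Subgroup.commutator_mem_commutator ha.1 hb.1),
      lowerPSeries.commutator_le m n (Subgroup.commutator_mem_commutator ha.2 hb.2)⟩,
    fun m a ha => Subgroup.mem_sup_left ⟨pow_mem ha.1 p, lowerPSeries.pow_mem ha.2⟩, ?_⟩
  obtain ⟨-, hgen, -⟩ := hF
  have hfin := lowerPSeries.finiteIndex hp.pos
    ((Subgroup.fg_iff _).2 ⟨_, rfl, Set.finite_range ι⟩) hgen
  have hsum := Subgroup.log_relIndex_eq_sum lowerPSeries.antitone lowerPSeries.zero hfin
  refine congrArg (liminf · atTop) (funext fun n => ?_)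
  have hopen := (lowerPSeries p F n).isOpen_of_isClosed_of_finiteIndex (lowerPSeries.isClosed n)
  rw [Subgroup.relIndex_topologicalClosure hopen, ← Subgroup.relIndex_top_right, hsum, hsum]
  simp only [top_inf_eq]

/-- Let `Γ` be the free discrete group on `d ≥ 2` generators, `F` its pro-`p` completion
(a free pro-`p` group on the images `ι i` of the generators, via `j = FreeGroup.lift ι`),
and let `Λ = ⊕_n P_n(F)/P_{n+1}(F)` be the graded `F_p`-Lie algebra associated to the lower
`p`-series. For a subgroup `Δ ≤ Γ` with image `D = j(Δ)`, the graded object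
`gr(Δ) = ⊕_n (Δ ∩ P_n)P_{n+1}/P_{n+1}` is a graded Lie subalgebra of `Λ` closed under the
`p`-power operators — group-theoretically: commutators and `p`-th powers of elements of
`D ∩ P_m` land in the corresponding components `(D ∩ P_{m'})P_{m'+1}` — and the topological
closure of `D` in `F` satisfies
`hdim_F^L(D̄) = dens_Λ(gr Δ) = liminf_n (Σ_{m<n} dim gr(Δ)_m)/(Σ_{m<n} dim Λ_m)`
(dimensions expressed as logarithms of indices; `lowerPSeries p F m = P_{m+1}(F)`). -/
theorem gr_subalgebra_and_hdim_eq_density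
    (p d : ℕ) (hp : p.Prime) (hd : 2 ≤ d)
    (F : Type) [Group F] [TopologicalSpace F] [IsTopologicalGroup F]
    (ι : Fin d → F) (hF : IsFreeProPGroupOn p ι)
    (Δ : Subgroup (FreeGroup (Fin d))) :
    (∀ m n : ℕ, ∀ a ∈ Δ.map (FreeGroup.lift ι) ⊓ lowerPSeries p F m,
      ∀ b ∈ Δ.map (FreeGroup.lift ι) ⊓ lowerPSeries p F n,
        ⁅a, b⁆ ∈ (Δ.map (FreeGroup.lift ι) ⊓ lowerPSeries p F (m + n + 1)) ⊔
          lowerPSeries p F (m + n + 2)) ∧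
    (∀ m : ℕ, ∀ a ∈ Δ.map (FreeGroup.lift ι) ⊓ lowerPSeries p F m,
        a ^ p ∈ (Δ.map (FreeGroup.lift ι) ⊓ lowerPSeries p F (m + 1)) ⊔
          lowerPSeries p F (m + 2)) ∧
    hDim (lowerPSeries p F) (Δ.map (FreeGroup.lift ι)).topologicalClosure =
      Filter.liminf
        (fun n : ℕ =>
          (∑ m ∈ Finset.range n,
            Real.log (Subgroup.relIndex (lowerPSeries p F (m + 1))
              (Δ.map (FreeGroup.lift ι) ⊓ lowerPSeries p F m) : ℝ)) /
          (∑ m ∈ Finset.range n,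
            Real.log (Subgroup.relIndex (lowerPSeries p F (m + 1))
              (lowerPSeries p F m) : ℝ)))
        Filter.atTop :=
  gr_subalgebra_and_hdim_eq_density_general p d hp F ι hF Δ
end
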